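/- Let F be a fatgraph with underlying graph G. Then (q+q^{-1})^{e(F)} M(G, (q+q^{-1})^2) = (-1)^{e(F)} (q+q^{-1})^{v(F)} \sum_{H \in S(F)} (q+q^{-1})^{p(H)+2g(H)} (-q)^{e(F)-e(H)} (1+q^{-2})^{e(F)-e(H)}, as Laurent polynomials in q. -/

import Mathlib

/-- Let `F` be a fatgraph (edges `ι`, `v` vertices) with underlying
graph `G`. Then, as Laurent polynomials in `q` (stated in any field with `q ≠ 0`):
`(q+q⁻¹)^{e(F)} M(G,(q+q⁻¹)²)
  = (-1)^{e(F)} (q+q⁻¹)^{v(F)} ∑_{H ∈ S(F)} (q+q⁻¹)^{p(H)+2g(H)} (-q)^{e(F)-e(H)} (1+q⁻²)^{e(F)-e(H)}`,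
where `M(G,u) = ∑_H (-1)^{e(H)} u^{k(H)}` and `2k(H) = p(H)+2g(H)-e(H)+v(H)`. -/
theorem scaled_chromatic_polynomial_state_sum
    (ι : Type) [Fintype ι] [DecidableEq ι] (v : ℕ) (k p g : Finset ι → ℕ)
    (hEuler : ∀ H : Finset ι,
      2 * (k H : ℤ) = (p H : ℤ) + 2 * (g H : ℤ) - (H.card : ℤ) + (v : ℤ))
    (K : Type) [Field K] (q : K) (hq : q ≠ 0) :
    (q + q⁻¹) ^ (Fintype.card ι) *
        ∑ H : Finset ι, (-1 : K) ^ H.card * ((q + q⁻¹) ^ 2) ^ (k H)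
      = (-1 : K) ^ (Fintype.card ι) * (q + q⁻¹) ^ v *
        ∑ H : Finset ι, (q + q⁻¹) ^ (p H + 2 * g H) *
          (-q) ^ (Fintype.card ι - H.card) *
          (1 + (q⁻¹) ^ 2) ^ (Fintype.card ι - H.card) := by
  rw [Finset.mul_sum, Finset.mul_sum]
  refine Finset.sum_congr rfl fun H _ => ?_
  have hcard : H.card ≤ Fintype.card ι := by simpa using Finset.card_le_univ H
  have hE := hEuler H
  set e := Fintype.card ι with he
  set m := e - H.card with hm
  have hfac : (-q) * (1 + (q⁻¹) ^ 2) = -(q + q⁻¹) := by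
    field_simp
  have h1 : (-q : K) ^ m * (1 + (q⁻¹) ^ 2) ^ m = (-1 : K) ^ m * (q + q⁻¹) ^ m := by
    rw [← mul_pow, hfac, neg_eq_neg_one_mul, mul_pow]
  have hexp : e + 2 * k H = v + (p H + 2 * g H) + m := by omega
  have hsign : e + m = H.card + 2 * m := by omega
  calc (q + q⁻¹) ^ e * ((-1 : K) ^ H.card * ((q + q⁻¹) ^ 2) ^ (k H))
      = (-1 : K) ^ H.card * (q + q⁻¹) ^ (e + 2 * k H) := by
        rw [pow_add, pow_mul]; ring
    _ = (-1 : K) ^ (e + m) * (q + q⁻¹) ^ (v + (p H + 2 * g H) + m) := by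
        rw [hexp, hsign, pow_add (-1 : K), pow_mul, neg_one_sq, one_pow, mul_one]
    _ = (-1 : K) ^ e * (q + q⁻¹) ^ v *
          ((q + q⁻¹) ^ (p H + 2 * g H) * (-q) ^ m * (1 + (q⁻¹) ^ 2) ^ m) := by
        rw [mul_assoc ((q + q⁻¹) ^ (p H + 2 * g H)), h1, pow_add, pow_add, pow_add]
        ring
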